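/- arXiv:math-ph/0510089 — 4 statements merged into one kernel-verified Lean document; each statement's English description precedes it below -/
import Mathlib

section
/- Let d ≥ 1 and let a, c > 0. For every natural number N there exists a constant C_N > 0, depending only on d, a, c, N, such that for every t ∈ (0,1], every measurable function K : ℝ^d × ℝ^d → ℝ satisfying 0 ≤ K(x,y) ≤ c · t^{-d/2} · exp(−a‖x−y‖²) for all x, y, and all lattice points n, k ∈ ℤ^d, one has (∫_{Q_n} ∫_{Q_k} K(x,y)² dy dx)^{1/2} ≤ C_N · t^{-d/2} / (1 + ‖n−k‖^N). -/
/-!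
For `x ∈ Q_n` and `y ∈ Q_k` the triangle inequality gives `‖n - k‖ ≤ ‖x - y‖ + √d`, and the
polynomial weight `(‖x - y‖ + √d) ^ N ≤ N! e^{‖x - y‖ + √d}` is absorbed by the Gaussian
`exp (-a ‖x - y‖²)` since `ρ ≤ a ρ² + 1 / (4a)`. Hence `K ≤ C_N t^{-d/2} / (1 + ‖n - k‖ ^ N)`
pointwise on `Q_n × Q_k`, and as both cubes have unit volume the same bound holds for the
`L²` norm of `K` there.
-/

open MeasureTheory

/-- The closed unit cube centered at the lattice point `m`. -/
def unitCube (d : ℕ) (m : Fin d → ℤ) : Set (EuclideanSpace ℝ (Fin d)) :=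
  {x | ∀ i, |x i - (m i : ℝ)| ≤ 1 / 2}

/-- The lattice point `m ∈ ℤ^d` viewed as a point of `ℝ^d`. -/
noncomputable def latt (d : ℕ) (m : Fin d → ℤ) : EuclideanSpace ℝ (Fin d) :=
  WithLp.toLp 2 (fun i => (m i : ℝ))

open Real Nat

lemma unitCube_eq_preimage_pi (d : ℕ) (m : Fin d → ℤ) :
    unitCube d m =
      WithLp.ofLp ⁻¹' Set.univ.pi fun i => Set.Icc ((m i : ℝ) - 1 / 2) ((m i : ℝ) + 1 / 2) := by
  ext x
  simp only [unitCube, Set.mem_preimage, Set.mem_univ_pi, Set.mem_Icc, abs_le]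
  refine forall_congr' fun i => ?_
  constructor <;> rintro ⟨h₁, h₂⟩ <;> constructor <;> linarith

lemma volume_unitCube (d : ℕ) (m : Fin d → ℤ) : volume (unitCube d m) = 1 := by
  rw [unitCube_eq_preimage_pi, (PiLp.volume_preserving_ofLp (Fin d)).measure_preimage
    (MeasurableSet.univ_pi fun _ => measurableSet_Icc).nullMeasurableSet, volume_pi_pi]
  simp only [Real.volume_Icc]
  norm_num

lemma norm_sub_latt_le_of_mem_unitCube {d : ℕ} {m : Fin d → ℤ} {x : EuclideanSpace ℝ (Fin d)}
    (hx : x ∈ unitCube d m) : ‖x - latt d m‖ ≤ √d / 2 := by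
  have hsq : ∑ i, ‖(x - latt d m) i‖ ^ 2 ≤ ∑ _i : Fin d, (1 / 2 : ℝ) ^ 2 :=
    Finset.sum_le_sum fun i _ => by
      simpa [latt, sq_abs] using pow_le_pow_left₀ (abs_nonneg _) (hx i) 2
  calc ‖x - latt d m‖ ≤ √(d * (1 / 2) ^ 2) := by
        rw [EuclideanSpace.norm_eq]
        exact Real.sqrt_le_sqrt (by simpa using hsq)
    _ = √d / 2 := by
        rw [Real.sqrt_mul d.cast_nonneg, Real.sqrt_sq (by norm_num)]
        ring

lemma norm_latt_sub_latt_le {d : ℕ} {n k : Fin d → ℤ} {x y : EuclideanSpace ℝ (Fin d)}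
    (hx : x ∈ unitCube d n) (hy : y ∈ unitCube d k) :
    ‖latt d n - latt d k‖ ≤ ‖x - y‖ + √d := by
  calc ‖latt d n - latt d k‖ = ‖(x - y) - (x - latt d n) + (y - latt d k)‖ := by
        congr 1; abel
    _ ≤ ‖x - y‖ + ‖x - latt d n‖ + ‖y - latt d k‖ := norm_add_le_of_le (norm_sub_le _ _) le_rfl
    _ ≤ ‖x - y‖ + √d := by
        linarith [norm_sub_latt_le_of_mem_unitCube hx, norm_sub_latt_le_of_mem_unitCube hy]

lemma pow_le_factorial_mul_exp {x : ℝ} (hx : 0 ≤ x) (N : ℕ) : x ^ N ≤ N ! * exp x := by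
  have := pow_div_factorial_le_exp x hx N
  rwa [div_le_iff₀ (by positivity), mul_comm] at this

lemma one_add_pow_mul_exp_neg_mul_sq_le {a r ρ s : ℝ} (ha : 0 < a) (hr : 0 ≤ r)
    (hrρ : r ≤ ρ + s) (N : ℕ) :
    (1 + r ^ N) * exp (-a * ρ ^ 2) ≤ 1 + N ! * exp (s + 1 / (4 * a)) := by
  have hlin : ρ ≤ a * ρ ^ 2 + 1 / (4 * a) := by
    rw [← sub_nonneg]
    have : a * ρ ^ 2 + 1 / (4 * a) - ρ = (2 * a * ρ - 1) ^ 2 / (4 * a) := by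
      field_simp; ring
    rw [this]; positivity
  have hpow : r ^ N * exp (-a * ρ ^ 2) ≤ N ! * exp (s + 1 / (4 * a)) :=
    calc r ^ N * exp (-a * ρ ^ 2) ≤ N ! * exp (ρ + s) * exp (-a * ρ ^ 2) := by
          gcongr
          exact (pow_le_pow_left₀ hr hrρ N).trans (pow_le_factorial_mul_exp (hr.trans hrρ) N)
      _ = N ! * exp (ρ - a * ρ ^ 2 + s) := by
          rw [mul_assoc, ← exp_add]; ring_nf
      _ ≤ N ! * exp (s + 1 / (4 * a)) :=
          mul_le_mul_of_nonneg_left (exp_le_exp.mpr (by linarith)) (by positivity)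
  have hgauss : exp (-a * ρ ^ 2) ≤ 1 := exp_le_one_iff.mpr (by nlinarith [sq_nonneg ρ])
  linarith [add_mul 1 (r ^ N) (exp (-a * ρ ^ 2))]

lemma exp_neg_mul_norm_sub_sq_le_of_mem_unitCube {d : ℕ} {a : ℝ} (ha : 0 < a) {n k : Fin d → ℤ}
    {x y : EuclideanSpace ℝ (Fin d)} (hx : x ∈ unitCube d n) (hy : y ∈ unitCube d k) (N : ℕ) :
    exp (-a * ‖x - y‖ ^ 2) ≤
      (1 + N ! * exp (√d + 1 / (4 * a))) / (1 + ‖latt d n - latt d k‖ ^ N) := by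
  rw [le_div_iff₀ (by positivity), mul_comm]
  exact one_add_pow_mul_exp_neg_mul_sq_le ha (norm_nonneg _) (norm_latt_sub_latt_le hx hy) N

lemma setIntegral_setIntegral_le_of_abs_le {α β : Type*} [MeasurableSpace α] [MeasurableSpace β]
    {μ : Measure α} {ν : Measure β} {s : Set α} {t : Set β} (hs : μ s < ⊤) (ht : ν t < ⊤)
    {f : α → β → ℝ} {M : ℝ} (hf : ∀ x ∈ s, ∀ y ∈ t, |f x y| ≤ M) :
    ∫ x in s, ∫ y in t, f x y ∂ν ∂μ ≤ M * ν.real t * μ.real s :=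
  (Real.le_norm_self _).trans <| norm_setIntegral_le_of_norm_le_const hs fun x hx =>
    norm_setIntegral_le_of_norm_le_const ht fun y hy => (Real.norm_eq_abs _).trans_le (hf x hx y hy)

theorem stmt1_general (d : ℕ) (a c : ℝ) (ha : 0 < a) (hc : 0 < c) (N : ℕ) :
    ∃ C > (0 : ℝ),
      ∀ t : ℝ, t ∈ Set.Ioc (0 : ℝ) 1 →
      ∀ K : EuclideanSpace ℝ (Fin d) × EuclideanSpace ℝ (Fin d) → ℝ,
        Measurable K →
        (∀ x y, 0 ≤ K (x, y) ∧
          K (x, y) ≤ c * t ^ (-(d : ℝ) / 2) * Real.exp (-a * ‖x - y‖ ^ 2)) →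
        ∀ n k : Fin d → ℤ,
          Real.sqrt (∫ x in unitCube d n, ∫ y in unitCube d k, (K (x, y)) ^ 2)
            ≤ C * t ^ (-(d : ℝ) / 2) / (1 + ‖latt d n - latt d k‖ ^ N) := by
  set C₀ := 1 + N ! * exp (√d + 1 / (4 * a))
  refine ⟨c * C₀, by positivity, fun t ⟨ht, _⟩ K _ hK n k => ?_⟩
  set M := c * C₀ * t ^ (-(d : ℝ) / 2) / (1 + ‖latt d n - latt d k‖ ^ N)
  have hM : 0 ≤ M := by positivity
  have hKM : ∀ x ∈ unitCube d n, ∀ y ∈ unitCube d k, |K (x, y) ^ 2| ≤ M ^ 2 := by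
    intro x hx y hy
    have hKxy : K (x, y) ≤ M :=
      calc K (x, y) ≤ c * t ^ (-(d : ℝ) / 2) * exp (-a * ‖x - y‖ ^ 2) := (hK x y).2
        _ ≤ c * t ^ (-(d : ℝ) / 2) * (C₀ / (1 + ‖latt d n - latt d k‖ ^ N)) := by
            gcongr; exact exp_neg_mul_norm_sub_sq_le_of_mem_unitCube ha hx hy N
        _ = M := by ring
    rw [abs_of_nonneg (sq_nonneg _)]
    exact pow_le_pow_left₀ (hK x y).1 hKxy 2
  have hvol (m : Fin d → ℤ) : volume (unitCube d m) < ⊤ := by simp [volume_unitCube]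
  have hint := setIntegral_setIntegral_le_of_abs_le (hvol n) (hvol k) hKM
  simp only [measureReal_def, volume_unitCube, ENNReal.toReal_one, mul_one] at hint
  exact Real.sqrt_le_iff.mpr ⟨hM, hint⟩

theorem stmt1 (d : ℕ) (hd : 1 ≤ d) (a c : ℝ) (ha : 0 < a) (hc : 0 < c) (N : ℕ) :
    ∃ C > (0 : ℝ),
      ∀ t : ℝ, t ∈ Set.Ioc (0 : ℝ) 1 →
      ∀ K : EuclideanSpace ℝ (Fin d) × EuclideanSpace ℝ (Fin d) → ℝ,
        Measurable K →
        (∀ x y, 0 ≤ K (x, y) ∧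
          K (x, y) ≤ c * t ^ (-(d : ℝ) / 2) * Real.exp (-a * ‖x - y‖ ^ 2)) →
        ∀ n k : Fin d → ℤ,
          Real.sqrt (∫ x in unitCube d n, ∫ y in unitCube d k, (K (x, y)) ^ 2)
            ≤ C * t ^ (-(d : ℝ) / 2) / (1 + ‖latt d n - latt d k‖ ^ N) :=
  stmt1_general d a c ha hc N
end

section
/- Let E and F be linear subspaces of ℝ^d. There exists a constant C > 0 (depending on E and F) such that for every x ∈ ℝ^d one has dist(x, E ∩ F) ≤ C · ( dist(x, E) + dist(x, F) ). -/
/-!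
The linear map `x ↦ (x mod E, x mod F)` has kernel `E ⊓ F`, so it descends to an injective linear
map on `V ⧸ (E ⊓ F)`. In finite dimension an injective linear map is antilipschitz, and the
quotient norm of `x` modulo a subspace `S` is `infDist x S`.
-/

open Metric

theorem Submodule.Quotient.norm_mk_eq_infDist {R M : Type*} [Ring R] [SeminormedAddCommGroup M]
    [Module R M] (S : Submodule R M) (x : M) :
    ‖(Submodule.Quotient.mk x : M ⧸ S)‖ = infDist x S :=
  QuotientAddGroup.norm_mk (S := S.toAddSubgroup) x

variable {𝕜 V W : Type*} [NontriviallyNormedField 𝕜] [CompleteSpace 𝕜]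
  [NormedAddCommGroup V] [NormedSpace 𝕜 V] [FiniteDimensional 𝕜 V]

theorem LinearMap.exists_infDist_ker_le_mul_norm [NormedAddCommGroup W] [NormedSpace 𝕜 W]
    (f : V →ₗ[𝕜] W) : ∃ C > (0 : ℝ), ∀ x : V, infDist x (ker f : Set V) ≤ C * ‖f x‖ := by
  have : IsClosed (ker f : Set V) := (ker f).closed_of_finiteDimensional
  obtain ⟨K, hK, hanti⟩ :=
    ((ker f).liftQ f le_rfl).exists_antilipschitzWith ((ker f).ker_liftQ_eq_bot f le_rfl le_rfl)
  refine ⟨K, hK, fun x => ?_⟩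
  simpa [← Submodule.Quotient.norm_mk_eq_infDist] using hanti.le_mul_norm_sub ((ker f).mkQ x) 0

theorem Submodule.exists_infDist_inf_le (E F : Submodule 𝕜 V) :
    ∃ C > (0 : ℝ), ∀ x : V,
      infDist x ((E ⊓ F : Submodule 𝕜 V) : Set V) ≤ C * (infDist x E + infDist x F) := by
  have : IsClosed (E : Set V) := E.closed_of_finiteDimensional
  have : IsClosed (F : Set V) := F.closed_of_finiteDimensional
  have hker : LinearMap.ker (E.mkQ.prod F.mkQ) = E ⊓ F := by
    rw [LinearMap.ker_prod, ker_mkQ, ker_mkQ]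
  obtain ⟨C, hC, hbound⟩ := (E.mkQ.prod F.mkQ).exists_infDist_ker_le_mul_norm
  refine ⟨C, hC, fun x => ?_⟩
  have hnorm : ‖(E.mkQ.prod F.mkQ) x‖ ≤ infDist x E + infDist x F := by
    simp only [LinearMap.prod_apply, Function.prod, Prod.norm_mk, mkQ_apply,
      Quotient.norm_mk_eq_infDist]
    exact max_le_add_of_nonneg infDist_nonneg infDist_nonneg
  calc infDist x ((E ⊓ F : Submodule 𝕜 V) : Set V) ≤ C * ‖(E.mkQ.prod F.mkQ) x‖ := by
        simpa only [hker] using hbound x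
    _ ≤ C * (infDist x E + infDist x F) := by gcongr

theorem stmt7 (d : ℕ) (E F : Submodule ℝ (EuclideanSpace ℝ (Fin d))) :
    ∃ C > (0 : ℝ), ∀ x : EuclideanSpace ℝ (Fin d),
      Metric.infDist x ((E ⊓ F : Submodule ℝ (EuclideanSpace ℝ (Fin d))) :
          Set (EuclideanSpace ℝ (Fin d)))
        ≤ C * (Metric.infDist x (E : Set (EuclideanSpace ℝ (Fin d))) +
               Metric.infDist x (F : Set (EuclideanSpace ℝ (Fin d)))) :=
  E.exists_infDist_inf_le F
end

section
/- Let β > 0 and γ > 0. There exists a constant K > 0 such that for every real s ≠ 0 and every real J ≥ 0 one has ∫₀^∞ t · e^{−βt} · e^{−γ J · arctan(t/|s|)} dt ≤ K · (1 + s²) / (1 + J²). -/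
open MeasureTheory Real Set

/-! Since `arctan u ≥ min u 1 / 2` for `u ≥ 0`, the weight `exp (-γ J arctan (t / |s|))` is at most
`exp (-γ J t / (2 |s|)) + exp (-γ J / 2)`. Against `t e^{-βt}` these integrate to
`1 / (β + γ J / (2 |s|))²` and `e^{-γ J / 2} / β²`. The first is at most both `1 / β²` and
`4 s² / (γ J)²`, and `J² e^{-γ J / 2}` is bounded, so both terms are `O((1 + s²) / (1 + J²))`. -/

lemma integrableOn_mul_exp_neg_mul {b : ℝ} (hb : 0 < b) :
    IntegrableOn (fun t : ℝ => t * exp (-(b * t))) (Ioi 0) := by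
  simpa [rpow_one, neg_mul] using
    integrableOn_rpow_mul_exp_neg_mul_rpow (s := 1) (p := 1) (by norm_num) one_pos hb

lemma integral_mul_exp_neg_mul {b : ℝ} (hb : 0 < b) :
    ∫ t in Ioi (0 : ℝ), t * exp (-(b * t)) = 1 / b ^ 2 := by
  have h := integral_rpow_mul_exp_neg_mul_Ioi (a := 2) (r := b) two_pos hb
  norm_num [Gamma_two] at h
  simpa [one_div, ← inv_pow] using h

lemma min_one_div_two_le_arctan {u : ℝ} (hu : 0 ≤ u) : min u 1 / 2 ≤ arctan u := by
  have hsqrt : √(1 + u ^ 2) ≤ 1 + u := sqrt_le_iff.2 ⟨by linarith, by nlinarith⟩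
  calc min u 1 / 2 ≤ u / (1 + u) := by
        rcases le_total u 1 with h | h
        · rw [min_eq_left h]; gcongr; linarith
        · rw [min_eq_right h, div_le_div_iff₀ two_pos (by linarith)]; linarith
    _ ≤ u / √(1 + u ^ 2) := by gcongr
    _ = sin (arctan u) := (sin_arctan u).symm
    _ ≤ arctan u := sin_le (arctan_nonneg.2 hu)

lemma exp_neg_mul_min_one_le {x : ℝ} (u : ℝ) :
    exp (-(x * min u 1)) ≤ exp (-(x * u)) + exp (-x) := by
  rcases min_choice u 1 with h | h <;> rw [h] <;> simp [(exp_pos _).le]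

lemma one_add_sq_mul_exp_neg_mul_le {a J : ℝ} (ha : 0 < a) (hJ : 0 ≤ J) :
    (1 + J ^ 2) * exp (-(a * J)) ≤ 1 + 2 / a ^ 2 := by
  have hexp : (a * J) ^ 2 / 2 ≤ exp (a * J) := by
    simpa using pow_div_factorial_le_exp (a * J) (by positivity) 2
  rw [exp_neg, ← div_eq_mul_inv, div_le_iff₀ (exp_pos _)]
  have : J ^ 2 ≤ 2 / a ^ 2 * exp (a * J) := by
    rw [div_mul_eq_mul_div, le_div_iff₀ (by positivity)]
    nlinarith
  nlinarith [one_le_exp (mul_nonneg ha.le hJ)]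

lemma one_add_sq_div_sq_add_mul_div_le {β a r J : ℝ} (hβ : 0 < β) (ha : 0 < a) (hr : 0 < r)
    (hJ : 0 ≤ J) : (1 + J ^ 2) / (β + a * J / r) ^ 2 ≤ 1 / β ^ 2 + r ^ 2 / a ^ 2 := by
  have hc : 0 ≤ a * J / r := by positivity
  rw [add_div]
  apply add_le_add
  · gcongr; linarith
  · rw [div_le_div_iff₀ (by positivity) (by positivity)]
    have : a * J ≤ r * (β + a * J / r) := by
      rw [mul_add, mul_div_cancel₀ _ hr.ne']; nlinarith
    nlinarith [pow_le_pow_left₀ (by positivity) this 2]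

lemma mul_exp_mul_exp_arctan_le {β γ r J t : ℝ} (hγ : 0 < γ) (hr : 0 < r) (hJ : 0 ≤ J)
    (ht : 0 ≤ t) :
    t * exp (-β * t) * exp (-γ * J * arctan (t / r)) ≤
      t * exp (-((β + γ / 2 * J / r) * t)) + exp (-(γ / 2 * J)) * (t * exp (-(β * t))) := by
  have harctan : exp (-γ * J * arctan (t / r)) ≤ exp (-(γ / 2 * J * min (t / r) 1)) := by
    gcongr
    have := min_one_div_two_le_arctan (div_nonneg ht hr.le)
    nlinarith [mul_nonneg hγ.le hJ]
  calc t * exp (-β * t) * exp (-γ * J * arctan (t / r))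
      ≤ t * exp (-β * t) * (exp (-(γ / 2 * J * (t / r))) + exp (-(γ / 2 * J))) := by
        gcongr
        exact harctan.trans (exp_neg_mul_min_one_le _)
    _ = _ := by
        rw [mul_add, mul_assoc, ← exp_add]
        ring_nf

lemma integral_mul_exp_mul_exp_arctan_le {β γ r J : ℝ} (hβ : 0 < β) (hγ : 0 < γ) (hr : 0 < r)
    (hJ : 0 ≤ J) :
    ∫ t in Ioi (0 : ℝ), t * exp (-β * t) * exp (-γ * J * arctan (t / r)) ≤
      1 / (β + γ / 2 * J / r) ^ 2 + exp (-(γ / 2 * J)) * (1 / β ^ 2) := by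
  have hc : 0 < β + γ / 2 * J / r := by positivity
  rw [← integral_mul_exp_neg_mul hc, ← integral_mul_exp_neg_mul hβ, ← integral_const_mul,
    ← integral_add (integrableOn_mul_exp_neg_mul hc)
      ((integrableOn_mul_exp_neg_mul hβ).const_mul _)]
  refine integral_mono_of_nonneg ?_ ((integrableOn_mul_exp_neg_mul hc).add
    ((integrableOn_mul_exp_neg_mul hβ).const_mul _)) ?_
  · filter_upwards [ae_restrict_mem measurableSet_Ioi] with t (ht : 0 < t)
    positivity
  · filter_upwards [ae_restrict_mem measurableSet_Ioi] with t (ht : 0 < t)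
    exact mul_exp_mul_exp_arctan_le hγ hr hJ ht.le

theorem stmt11 (β γ : ℝ) (hβ : 0 < β) (hγ : 0 < γ) :
    ∃ K > (0 : ℝ), ∀ s : ℝ, s ≠ 0 → ∀ J : ℝ, 0 ≤ J →
      (∫ t in Set.Ioi (0 : ℝ),
          t * Real.exp (-β * t) * Real.exp (-γ * J * Real.arctan (t / |s|)))
        ≤ K * (1 + s ^ 2) / (1 + J ^ 2) := by
  have ha : 0 < γ / 2 := half_pos hγ
  refine ⟨1 / β ^ 2 + 1 / (γ / 2) ^ 2 + (1 + 2 / (γ / 2) ^ 2) / β ^ 2, by positivity, ?_⟩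
  intro s hs J hJ
  have hr : 0 < |s| := abs_pos.2 hs
  rw [le_div_iff₀ (by positivity)]
  calc (∫ t in Ioi (0 : ℝ), t * exp (-β * t) * exp (-γ * J * arctan (t / |s|))) * (1 + J ^ 2)
      ≤ (1 / (β + γ / 2 * J / |s|) ^ 2 + exp (-(γ / 2 * J)) * (1 / β ^ 2)) * (1 + J ^ 2) := by
        gcongr
        exact integral_mul_exp_mul_exp_arctan_le hβ hγ hr hJ
    _ = (1 + J ^ 2) / (β + γ / 2 * J / |s|) ^ 2
          + (1 + J ^ 2) * exp (-(γ / 2 * J)) / β ^ 2 := by ring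
    _ ≤ (1 / β ^ 2 + |s| ^ 2 / (γ / 2) ^ 2) + (1 + 2 / (γ / 2) ^ 2) / β ^ 2 := by
        gcongr
        · exact one_add_sq_div_sq_add_mul_div_le hβ ha hr hJ
        · exact one_add_sq_mul_exp_neg_mul_le ha hJ
    _ ≤ _ := by
        have : 0 ≤ (1 / β ^ 2 + (1 + 2 / (γ / 2) ^ 2) / β ^ 2) * s ^ 2 + 1 / (γ / 2) ^ 2 := by
          positivity
        rw [sq_abs]
        linear_combination this
end

section
/- Let β, γ, λ > 0 and J ≥ 0. Let φ : (0,∞) × ℝ → ℂ be measurable with |φ(t,s)| ≤ λ · e^{−βt} · e^{−γ J · arctan(t/|s|)} for all t > 0 and all s ≠ 0, and let h : ℝ → ℂ be measurable with A := ∫_ℝ |h(s)| (1 + s²) ds < ∞. Then the iterated integral I := ∫_ℝ h(s) ( ∫₀^∞ t · φ(t,s) dt ) ds converges absolutely, and there is a constant K > 0 depending only on β and γ such that |I| ≤ K · λ · A / (1 + J²). -/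
open MeasureTheory Real Set

lemma div_two_le_arctan {x : ℝ} (h0 : 0 ≤ x) (h1 : x ≤ 1) : x / 2 ≤ arctan x := by
  have hmono : MonotoneOn (fun y : ℝ => arctan y - y / 2) (Icc 0 1) := by
    refine monotoneOn_of_deriv_nonneg (convex_Icc 0 1) (by fun_prop)
      (differentiable_arctan.sub (differentiable_id.div_const 2)).differentiableOn ?_
    intro y hy
    rw [interior_Icc] at hy
    have hderiv : HasDerivAt (fun y : ℝ => arctan y - y / 2) (1 / (1 + y ^ 2) - 1 / 2) y :=
      (hasDerivAt_arctan y).sub ((hasDerivAt_id y).div_const 2)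
    rw [hderiv.deriv, sub_nonneg]
    gcongr
    nlinarith [hy.1, hy.2]
  simpa using hmono (left_mem_Icc.2 zero_le_one) ⟨h0, h1⟩ h0

lemma min_div_two_pi_div_four_le_arctan {x : ℝ} (hx : 0 ≤ x) :
    min (x / 2) (π / 4) ≤ arctan x := by
  rcases le_or_gt x 1 with h | h
  · exact (min_le_left _ _).trans (div_two_le_arctan hx h)
  · exact (min_le_right _ _).trans (arctan_one ▸ arctan_mono h.le)

lemma exp_neg_mul_arctan_le {k x : ℝ} (hk : 0 ≤ k) (hx : 0 ≤ x) :
    exp (-k * arctan x) ≤ exp (-(k * x / 2)) + exp (-(k * (π / 4))) := by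
  have h := mul_le_mul_of_nonneg_left (min_div_two_pi_div_four_le_arctan hx) hk
  rcases min_cases (x / 2) (π / 4) with ⟨hmin, -⟩ | ⟨hmin, -⟩ <;> rw [hmin] at h
  · exact le_add_of_le_of_nonneg (exp_le_exp.2 (by linarith)) (exp_pos _).le
  · exact le_add_of_nonneg_of_le (exp_pos _).le (exp_le_exp.2 (by linarith))

lemma exp_neg_mul_mul_one_add_sq_le {c J : ℝ} (hc : 0 < c) (hJ : 0 ≤ J) :
    exp (-(c * J)) * (1 + J ^ 2) ≤ 1 + 2 / c ^ 2 := by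
  have hcJ : 0 ≤ c * J := mul_nonneg hc.le hJ
  have hsq : (c * J) ^ 2 / 2 ≤ exp (c * J) := by
    simpa using pow_div_factorial_le_exp _ hcJ 2
  have hJsq : J ^ 2 / exp (c * J) ≤ 2 / c ^ 2 := by
    rw [div_le_div_iff₀ (exp_pos _) (by positivity)]
    nlinarith
  rw [mul_add, mul_one, exp_neg, inv_mul_eq_div]
  gcongr
  exact inv_le_one_of_one_le₀ (one_le_exp hcJ)

lemma one_add_sq_div_sq_le {β γ J r : ℝ} (hβ : 0 < β) (hγ : 0 < γ) (hJ : 0 ≤ J)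
    (hr : 0 < r) :
    (1 + J ^ 2) / (β + γ * J / (2 * r)) ^ 2 ≤ 1 / β ^ 2 + 4 * r ^ 2 / γ ^ 2 := by
  have hβa : β ≤ β + γ * J / (2 * r) := le_add_of_nonneg_right (by positivity)
  have hJa : γ * J ≤ 2 * r * (β + γ * J / (2 * r)) := by
    rw [mul_add, mul_div_cancel₀ _ (by positivity)]
    nlinarith
  rw [add_div]
  refine add_le_add (by gcongr) ?_
  rw [div_le_div_iff₀ (by positivity) (by positivity)]
  nlinarith [mul_le_mul hJa hJa (by positivity) (by positivity)]

lemma one_add_sq_mul_decay_bound_le {β γ J r : ℝ} (hβ : 0 < β) (hγ : 0 < γ) (hJ : 0 ≤ J)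
    (hr : 0 < r) :
    (1 + J ^ 2) * (1 / (β + γ * J / (2 * r)) ^ 2 + exp (-(γ * J * (π / 4))) / β ^ 2) ≤
      ((2 + 2 / (γ * π / 4) ^ 2) / β ^ 2 + 4 / γ ^ 2) * (1 + r ^ 2) := by
  have hsmall := one_add_sq_div_sq_le hβ hγ hJ hr
  have hlarge := exp_neg_mul_mul_one_add_sq_le (c := γ * π / 4) (by positivity) hJ
  rw [show γ * π / 4 * J = γ * J * (π / 4) by ring] at hlarge
  have hβ2 : 0 < β ^ 2 := by positivity
  calc (1 + J ^ 2) * (1 / (β + γ * J / (2 * r)) ^ 2 + exp (-(γ * J * (π / 4))) / β ^ 2)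
      = (1 + J ^ 2) / (β + γ * J / (2 * r)) ^ 2
          + exp (-(γ * J * (π / 4))) * (1 + J ^ 2) / β ^ 2 := by ring
    _ ≤ 1 / β ^ 2 + 4 * r ^ 2 / γ ^ 2 + (1 + 2 / (γ * π / 4) ^ 2) / β ^ 2 := by gcongr
    _ = (2 + 2 / (γ * π / 4) ^ 2) / β ^ 2 + 4 / γ ^ 2 * r ^ 2 := by ring
    _ ≤ ((2 + 2 / (γ * π / 4) ^ 2) / β ^ 2 + 4 / γ ^ 2) * (1 + r ^ 2) := by
      have : 0 ≤ (2 + 2 / (γ * π / 4) ^ 2) / β ^ 2 * r ^ 2 + 4 / γ ^ 2 := by positivity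
      linarith

lemma norm_ofReal_mul_le_of_arctan_decay {z : ℂ} {lam b k r t : ℝ} (hlam : 0 ≤ lam)
    (hk : 0 ≤ k) (hr : 0 < r) (ht : 0 < t)
    (hz : ‖z‖ ≤ lam * exp (-b * t) * exp (-k * arctan (t / r))) :
    ‖(t : ℂ) * z‖ ≤
      lam * (t * exp (-((b + k / (2 * r)) * t)) + exp (-(k * (π / 4))) * (t * exp (-(b * t)))) := by
  have harctan := exp_neg_mul_arctan_le hk (div_nonneg ht.le hr.le)
  have hsplit : -((b + k / (2 * r)) * t) = -b * t + -(k * (t / r) / 2) := by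
    field_simp
    ring
  calc ‖(t : ℂ) * z‖ = t * ‖z‖ := by
        rw [norm_mul, Complex.norm_real, norm_of_nonneg ht.le]
    _ ≤ t * (lam * exp (-b * t) * (exp (-(k * (t / r) / 2)) + exp (-(k * (π / 4))))) := by
        gcongr
        exact hz.trans (by gcongr)
    _ = _ := by
        rw [hsplit, exp_add, neg_mul]
        ring

lemma integrableOn_and_norm_integral_le_of_arctan_decay {f : ℝ → ℂ} (hf : Measurable f)
    {lam b k r : ℝ} (hlam : 0 ≤ lam) (hb : 0 < b) (hk : 0 ≤ k) (hr : 0 < r)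
    (hbound : ∀ t, 0 < t → ‖f t‖ ≤ lam * exp (-b * t) * exp (-k * arctan (t / r))) :
    IntegrableOn (fun t : ℝ => (t : ℂ) * f t) (Ioi 0) ∧
      ‖∫ t in Ioi (0 : ℝ), (t : ℂ) * f t‖ ≤
        lam * (1 / (b + k / (2 * r)) ^ 2 + exp (-(k * (π / 4))) / b ^ 2) := by
  have hb' : 0 < b + k / (2 * r) := by positivity
  set g : ℝ → ℝ := fun t ↦
    lam * (t * exp (-((b + k / (2 * r)) * t)) + exp (-(k * (π / 4))) * (t * exp (-(b * t))))
  have hg : IntegrableOn g (Ioi 0) := ((integrableOn_mul_exp_neg_mul hb').add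
    ((integrableOn_mul_exp_neg_mul hb).const_mul _)).const_mul lam
  have hle : ∀ᵐ (t : ℝ) ∂volume.restrict (Ioi 0), ‖(t : ℂ) * f t‖ ≤ g t :=
    ae_restrict_of_forall_mem measurableSet_Ioi fun t ht =>
      norm_ofReal_mul_le_of_arctan_decay hlam hk hr ht (hbound t ht)
  refine ⟨hg.mono' (by fun_prop) hle, (norm_integral_le_of_norm_le hg hle).trans_eq ?_⟩
  rw [integral_const_mul, integral_add (integrableOn_mul_exp_neg_mul hb')
    ((integrableOn_mul_exp_neg_mul hb).const_mul _), integral_const_mul,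
    integral_mul_exp_neg_mul hb', integral_mul_exp_neg_mul hb]
  ring

theorem stmt12 (β γ : ℝ) (hβ : 0 < β) (hγ : 0 < γ) :
    ∃ K > (0 : ℝ),
      ∀ (lam J : ℝ), 0 < lam → 0 ≤ J →
      ∀ φ : ℝ → ℝ → ℂ, Measurable (Function.uncurry φ) →
        (∀ t : ℝ, 0 < t → ∀ s : ℝ, s ≠ 0 →
          ‖φ t s‖ ≤ lam * Real.exp (-β * t) * Real.exp (-γ * J * Real.arctan (t / |s|))) →
      ∀ h : ℝ → ℂ, Measurable h →
        Integrable (fun s => ‖h s‖ * (1 + s ^ 2)) →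
        (∀ s : ℝ, s ≠ 0 →
          IntegrableOn (fun t : ℝ => (t : ℂ) * φ t s) (Set.Ioi (0 : ℝ))) ∧
        Integrable (fun s : ℝ => h s * ∫ t in Set.Ioi (0 : ℝ), (t : ℂ) * φ t s) ∧
        ‖∫ s : ℝ, h s * ∫ t in Set.Ioi (0 : ℝ), (t : ℂ) * φ t s‖
          ≤ K * lam * (∫ s : ℝ, ‖h s‖ * (1 + s ^ 2)) / (1 + J ^ 2) := by
  set K := (2 + 2 / (γ * π / 4) ^ 2) / β ^ 2 + 4 / γ ^ 2
  refine ⟨K, by positivity, fun lam J hlam hJ φ hφm hφ h hhm hhi => ?_⟩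
  have hslice (s : ℝ) (hs : s ≠ 0) :=
    integrableOn_and_norm_integral_le_of_arctan_decay (f := fun t ↦ φ t s)
      (hφm.comp (measurable_id.prodMk measurable_const)) hlam.le hβ (mul_nonneg hγ.le hJ)
      (abs_pos.2 hs) fun t ht => by rw [← neg_mul]; exact hφ t ht s hs
  have hbound : ∀ᵐ s, ‖h s * ∫ t in Ioi (0 : ℝ), (t : ℂ) * φ t s‖ ≤
      lam * K / (1 + J ^ 2) * (‖h s‖ * (1 + s ^ 2)) := by
    filter_upwards [volume.ae_ne 0] with s hs
    have hdecay := one_add_sq_mul_decay_bound_le hβ hγ hJ (abs_pos.2 hs)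
    rw [sq_abs, ← le_div_iff₀' (by positivity)] at hdecay
    calc ‖h s * ∫ t in Ioi (0 : ℝ), (t : ℂ) * φ t s‖
        ≤ ‖h s‖ * (lam * (K * (1 + s ^ 2) / (1 + J ^ 2))) := by
          rw [norm_mul]
          gcongr
          exact (hslice s hs).2.trans (by gcongr)
      _ = lam * K / (1 + J ^ 2) * (‖h s‖ * (1 + s ^ 2)) := by ring
  have hinner : StronglyMeasurable fun s ↦ ∫ t in Ioi (0 : ℝ), (t : ℂ) * φ t s :=
    (Measurable.stronglyMeasurable (by fun_prop :
      Measurable fun p : ℝ × ℝ ↦ (p.2 : ℂ) * φ p.2 p.1)).integral_prod_right'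
  have hmeas := hhm.aestronglyMeasurable.mul (hinner.aestronglyMeasurable (μ := volume))
  refine ⟨fun s hs => (hslice s hs).1, (hhi.const_mul _).mono' hmeas hbound, ?_⟩
  calc _ ≤ ∫ s, lam * K / (1 + J ^ 2) * (‖h s‖ * (1 + s ^ 2)) :=
        norm_integral_le_of_norm_le (hhi.const_mul _) hbound
    _ = _ := by rw [integral_const_mul]; ring
end
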